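/- Let ε, η > 0, 𝒜 = exp(-εη/2), and let f : ℝ → ℝ be a smooth function. Let M_h be the multiplication operator (M_hψ)(x) = f(ηx/2)·ψ(x). Then for every smooth ψ : ℝ → ℂ and every x ∈ ℝ: ½·(L₀†([M_h, L₀]ψ))(x) + ½·(([L₀†, M_h])(L₀ψ))(x) = ( (𝒜²ε²η²/8)·f''(ηx/2) - (𝒜εη/2)·sin(ηx)·f'(ηx/2) )·ψ(x). -/

import Mathlib

open Complex

/-- Lindblad operator `L₀ = 𝒜 e^{iηq}(1-εp) - 1` realized on smooth functions. -/
noncomputable def L0 (ε η : ℝ) : (ℝ → ℂ) → (ℝ → ℂ) := fun ψ x =>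
  (Real.exp (-(ε * η / 2)) : ℂ) * Complex.exp (Complex.I * η * x) *
    (ψ x + Complex.I * ε * deriv ψ x) - ψ x

/-- Formal adjoint `L₀†` of `L₀`. -/
noncomputable def L0d (ε η : ℝ) : (ℝ → ℂ) → (ℝ → ℂ) := fun ψ x =>
  (Real.exp (-(ε * η / 2)) : ℂ) * Complex.exp (-(Complex.I * η * x)) *
    (((1 : ℂ) + ε * η) * ψ x + Complex.I * ε * deriv ψ x) - ψ x

/-- Multiplication operator by `f(ηx/2)`. -/
noncomputable def Mh (η : ℝ) (f : ℝ → ℝ) : (ℝ → ℂ) → (ℝ → ℂ) := fun ψ x =>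
  (f (η * x / 2) : ℂ) * ψ x

/-- Commutator of two operators on functions. -/
noncomputable def opComm (A B : (ℝ → ℂ) → (ℝ → ℂ)) : (ℝ → ℂ) → (ℝ → ℂ) :=
  fun ψ => A (B ψ) - B (A ψ)

private lemma hasDerivAt_castf (η : ℝ) (f : ℝ → ℝ) (hf : Differentiable ℝ f) (y : ℝ) :
    HasDerivAt (fun t : ℝ => ((f (η * t / 2) : ℝ) : ℂ))
      (((η / 2) * deriv f (η * y / 2) : ℝ) : ℂ) y := by
  have h1 : HasDerivAt (fun t : ℝ => η * t / 2) (η / 2) y := by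
    simpa using ((hasDerivAt_id y).const_mul η).div_const 2
  have h2 := (hf (η * y / 2)).hasDerivAt
  have := (h2.comp y h1).ofReal_comp
  convert this using 1
  · rfl
  · push_cast; ring

private lemma hasDerivAt_cexp_lin (η : ℝ) (x : ℝ) :
    HasDerivAt (fun t : ℝ => Complex.exp (Complex.I * η * t))
      (Complex.I * η * Complex.exp (Complex.I * η * x)) x := by
  have h : HasDerivAt (fun t : ℝ => Complex.I * η * (t:ℂ)) (Complex.I * η) x := by
    simpa using (Complex.ofRealCLM.hasDerivAt (x := x)).const_mul (Complex.I * η)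
  simpa [mul_comm] using h.cexp

theorem dissipator_periodic_observable (ε η : ℝ) (hε : 0 < ε) (hη : 0 < η)
    (f : ℝ → ℝ) (hf : ContDiff ℝ (⊤ : ℕ∞) f)
    (ψ : ℝ → ℂ) (hψ : ContDiff ℝ (⊤ : ℕ∞) ψ) (x : ℝ) :
    (1 / 2 : ℂ) * L0d ε η (opComm (Mh η f) (L0 ε η) ψ) x +
      (1 / 2 : ℂ) * opComm (L0d ε η) (Mh η f) (L0 ε η ψ) x =
      (((Real.exp (-(ε * η / 2)) : ℂ) ^ 2 * ε ^ 2 * η ^ 2 / 8) *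
          (deriv (deriv f) (η * x / 2) : ℝ)
        - ((Real.exp (-(ε * η / 2)) : ℂ) * ε * η / 2) * (Real.sin (η * x) : ℂ) *
          (deriv f (η * x / 2) : ℝ)) * ψ x := by
  have h1le : (1 : WithTop ℕ∞) ≤ ((⊤ : ℕ∞) : WithTop ℕ∞) := by exact_mod_cast le_top
  have hf' : Differentiable ℝ f := hf.differentiable (by simp)
  have hfd' : Differentiable ℝ (deriv f) :=
    (contDiff_infty_iff_deriv.mp (hf.of_le (by simp))).2.differentiable (by simp)
  have hψ' : Differentiable ℝ ψ := hψ.differentiable (by simp)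
  have hψd' : Differentiable ℝ (deriv ψ) :=
    (contDiff_infty_iff_deriv.mp (hψ.of_le (by simp))).2.differentiable (by simp)
  set A : ℂ := (Real.exp (-(ε * η / 2)) : ℂ) with hA
  -- derivative of Mh η f ψ at any point
  have hMψ : ∀ y : ℝ, deriv (Mh η f ψ) y =
      (((η / 2) * deriv f (η * y / 2) : ℝ) : ℂ) * ψ y +
        ((f (η * y / 2) : ℝ) : ℂ) * deriv ψ y := fun y =>
    ((hasDerivAt_castf η f hf' y).mul (hψ' y).hasDerivAt).deriv
  -- closed form of the first commutator
  have hcomm1 : opComm (Mh η f) (L0 ε η) ψ =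
      fun y : ℝ => -(Complex.I * ε * (η / 2)) * A * Complex.exp (Complex.I * η * y) *
        ((deriv f (η * y / 2) : ℝ) : ℂ) * ψ y := by
    funext y
    simp only [opComm, Mh, L0, Pi.sub_apply]
    rw [hMψ y, hA]
    push_cast; ring
  rw [hcomm1]
  -- derivative of the closed form at x
  set E : ℂ := Complex.exp (Complex.I * η * x) with hE
  set E' : ℂ := Complex.exp (-(Complex.I * η * x)) with hE'
  have hΦ : HasDerivAt (fun y : ℝ => -(Complex.I * ε * (η / 2)) * A *
        Complex.exp (Complex.I * η * y) * ((deriv f (η * y / 2) : ℝ) : ℂ) * ψ y)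
      ((-(Complex.I * ε * (η / 2)) * A * (Complex.I * η * E) *
          ((deriv f (η * x / 2) : ℝ) : ℂ) +
        -(Complex.I * ε * (η / 2)) * A * E *
          (((η / 2) * deriv (deriv f) (η * x / 2) : ℝ) : ℂ)) * ψ x +
        -(Complex.I * ε * (η / 2)) * A * E * ((deriv f (η * x / 2) : ℝ) : ℂ) *
          deriv ψ x) x := by
    exact ((((hasDerivAt_cexp_lin η x).const_mul (-(Complex.I * ε * (η / 2)) * A)).mul
      (hasDerivAt_castf η (deriv f) hfd' x)).mul (hψ' x).hasDerivAt)
  -- derivative of L0 ψ at x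
  have hχ : HasDerivAt (L0 ε η ψ)
      (A * (Complex.I * η * E) * (ψ x + Complex.I * ε * deriv ψ x) +
        A * E * (deriv ψ x + Complex.I * ε * deriv (deriv ψ) x) - deriv ψ x) x := by
    have h1 : HasDerivAt (fun y : ℝ => ψ y + Complex.I * ε * deriv ψ y)
        (deriv ψ x + Complex.I * ε * deriv (deriv ψ) x) x :=
      (hψ' x).hasDerivAt.add ((hψd' x).hasDerivAt.const_mul (Complex.I * ε))
    have h2 := (((hasDerivAt_cexp_lin η x).const_mul A).mul h1).sub (hψ' x).hasDerivAt
    exact h2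
  -- derivative of Mh η f (L0 ε η ψ) at x
  have hMχ : deriv (Mh η f (L0 ε η ψ)) x =
      (((η / 2) * deriv f (η * x / 2) : ℝ) : ℂ) * L0 ε η ψ x +
        ((f (η * x / 2) : ℝ) : ℂ) *
          (A * (Complex.I * η * E) * (ψ x + Complex.I * ε * deriv ψ x) +
            A * E * (deriv ψ x + Complex.I * ε * deriv (deriv ψ) x) - deriv ψ x) :=
    ((hasDerivAt_castf η f hf' x).mul hχ).deriv
  have hEE' : E * E' = 1 := by
    rw [hE, hE', ← Complex.exp_add]; simp
  have hsin : ((Real.sin (η * x) : ℝ) : ℂ) = (E' - E) * Complex.I / 2 := by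
    rw [Complex.ofReal_sin, Complex.sin, hE, hE']
    norm_num
    congr 2 <;> ring
  simp only [L0d, Mh, opComm, Pi.sub_apply, L0]
  rw [hΦ.deriv, hMχ, hχ.deriv, hsin]
  simp only [L0, ← hA, ← hE, ← hE']
  push_cast
  linear_combination (-(A ^ 2 * (ε:ℂ) ^ 2 * (η:ℂ) ^ 2 * Complex.I ^ 2 *
      ((deriv (deriv f) (η * x / 2) : ℝ) : ℂ) * ψ x / 8)) * hEE' +
    (-(A ^ 2 * (ε:ℂ) ^ 2 * (η:ℂ) ^ 2 * Complex.I * E * E' *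
        ((deriv f (η * x / 2) : ℝ) : ℂ) * ψ x / 4) -
      A ^ 2 * (ε:ℂ) ^ 2 * (η:ℂ) ^ 2 * ((deriv (deriv f) (η * x / 2) : ℝ) : ℂ) * ψ x / 8) *
      Complex.I_sq
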